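/- arXiv:2309.13928 — 2 statements merged into one kernel-verified Lean document; each statement's English description precedes it below -/
import Mathlib

section
/- In G = ℚ ⋊_q M, let g = (c, s) and let a = (d, 1), b = (e, 1) with d, e ∈ ℚ. Write a⁻¹ g a = (c₁, s) and b⁻¹ g b = (c₂, s). Then (ab)⁻¹ g (ab) = (c₁ + c₂ − c, s); in particular, when both secrets of the non-commutative Diffie–Hellman protocol lie in the normal subgroup inl(ℚ), the shared key is determined by the public data g, gᵃ, gᵇ. -/
/-- The semidirect product `G = ℚ ⋊_q M` of the additive group of `ℚ` by an abelian
group `M`, where `t : M` acts on `ℚ` by multiplication by `q t`.  Elements are pairs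
`⟨d, t⟩` with `d : ℚ`, `t : M`, multiplied by `⟨d, t⟩ * ⟨e, u⟩ = ⟨d + q t * e, t * u⟩`. -/
@[ext]
structure QSemidirect (M : Type*) [CommGroup M] (q : M →* ℚˣ) where
  fst : ℚ
  snd : M

namespace QSemidirect

variable {M : Type*} [CommGroup M] {q : M →* ℚˣ}

instance : Mul (QSemidirect M q) :=
  ⟨fun x y => ⟨x.fst + (q x.snd : ℚ) * y.fst, x.snd * y.snd⟩⟩

instance : One (QSemidirect M q) := ⟨⟨0, 1⟩⟩

instance : Inv (QSemidirect M q) :=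
  ⟨fun x => ⟨-((q x.snd : ℚ)⁻¹ * x.fst), x.snd⁻¹⟩⟩

@[simp] lemma mul_fst (x y : QSemidirect M q) :
    (x * y).fst = x.fst + (q x.snd : ℚ) * y.fst := rfl

@[simp] lemma mul_snd (x y : QSemidirect M q) : (x * y).snd = x.snd * y.snd := rfl

@[simp] lemma one_fst : (1 : QSemidirect M q).fst = 0 := rfl

@[simp] lemma one_snd : (1 : QSemidirect M q).snd = 1 := rfl

@[simp] lemma inv_fst (x : QSemidirect M q) :
    (x⁻¹).fst = -((q x.snd : ℚ)⁻¹ * x.fst) := rfl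

@[simp] lemma inv_snd (x : QSemidirect M q) : (x⁻¹).snd = x.snd⁻¹ := rfl

instance : Group (QSemidirect M q) where
  mul_assoc x y z := by
    ext
    · simp only [mul_fst, mul_snd, map_mul, Units.val_mul]; ring
    · simp [mul_assoc]
  one_mul x := by ext <;> simp
  mul_one x := by ext <;> simp
  inv_mul_cancel x := by
    ext
    · have h : (q x.snd : ℚ) ≠ 0 := Units.ne_zero _
      simp only [mul_fst, inv_fst, inv_snd, map_inv, one_fst]
      field_simp
      simp [Units.mul_inv]
    · simp

end QSemidirect

/-- Ko–Lee with both secrets in the normal subgroup `inl ℚ`: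
the shared key `(ab)⁻¹ g (ab)` equals `(c₁ + c₂ - c, s)`, hence is determined by the
public data `g`, `gᵃ`, `gᵇ`. -/
theorem koLee_key_from_public_inl (M : Type*) [CommGroup M] (q : M →* ℚˣ)
    (c c₁ c₂ d e : ℚ) (s : M)
    (h₁ : (⟨d, 1⟩ : QSemidirect M q)⁻¹ * ⟨c, s⟩ * ⟨d, 1⟩ = ⟨c₁, s⟩)
    (h₂ : (⟨e, 1⟩ : QSemidirect M q)⁻¹ * ⟨c, s⟩ * ⟨e, 1⟩ = ⟨c₂, s⟩) :
    ((⟨d, 1⟩ : QSemidirect M q) * ⟨e, 1⟩)⁻¹ * ⟨c, s⟩ * ((⟨d, 1⟩ : QSemidirect M q) * ⟨e, 1⟩)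
      = ⟨c₁ + c₂ - c, s⟩ := by
  have e₁ := congrArg QSemidirect.fst h₁
  have e₂ := congrArg QSemidirect.fst h₂
  simp only [QSemidirect.mul_fst, QSemidirect.inv_fst, QSemidirect.inv_snd,
    QSemidirect.mul_snd, map_one, Units.val_one, inv_one, one_mul, mul_one] at e₁ e₂ ⊢
  ext
  · simp only [QSemidirect.mul_fst, QSemidirect.mul_snd, map_mul, map_one,
      Units.val_one, Units.val_mul, QSemidirect.inv_fst, QSemidirect.inv_snd,
      inv_one, one_mul, mul_one]
    rw [← e₁, ← e₂]; ring
  · simp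
end

section
/- Let M be an abelian group and q : M →* ℚˣ a group homomorphism with q(u₀) ≠ 1 for some u₀ ∈ M, and let G = ℚ ⋊_q M. Then every complement of the normal subgroup inl(ℚ) in G is conjugate to the canonical complement inr(M) by an element of inl(ℚ): if H is a subgroup of G with H ∩ inl(ℚ) trivial and H · inl(ℚ) = G, then there exists r ∈ ℚ such that H = inl(r)⁻¹ · inr(M) · inl(r). -/
/-- If the action of `M` on `ℚ` through `q` is nontrivial, then every complement of
the normal subgroup `inl ℚ` in `G = ℚ ⋊_q M` is conjugate to the canonical complement
`inr M` by an element `inl r` of `inl ℚ`. -/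
theorem complement_is_conjugate (M : Type*) [CommGroup M] (q : M →* ℚˣ)
    (u₀ : M) (hu₀ : (q u₀ : ℚ) ≠ 1)
    (H : Subgroup (QSemidirect M q))
    (htriv : ∀ x ∈ H, x.snd = 1 → x = 1)
    (hcompl : ∀ g : QSemidirect M q, ∃ h ∈ H, ∃ d : ℚ, g = h * ⟨d, 1⟩) :
    ∃ r : ℚ, (H : Set (QSemidirect M q))
      = {x | ∃ u : M, x = (⟨r, 1⟩ : QSemidirect M q)⁻¹ * ⟨0, u⟩ * ⟨r, 1⟩} := by

  have huniq : ∀ y ∈ H, ∀ z ∈ H, y.snd = z.snd → y = z := by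
    intro y hy z hz hsnd
    have hm : y * z⁻¹ ∈ H := H.mul_mem hy (H.inv_mem hz)
    have h1 : (y * z⁻¹).snd = 1 := by simp [hsnd]
    have h2 : y * z⁻¹ = 1 := htriv _ hm h1
    calc y = y * z⁻¹ * z := by group
    _ = z := by rw [h2]; group
  obtain ⟨h₀, hh₀, d₀, hd₀⟩ := hcompl ⟨0, u₀⟩
  have hsnd₀ : h₀.snd = u₀ := by
    have := congrArg QSemidirect.snd hd₀
    simpa using this.symm
  set r : ℚ := h₀.fst / ((q u₀ : ℚ) - 1) with hr
  have hne : (q u₀ : ℚ) - 1 ≠ 0 := sub_ne_zero.mpr hu₀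
  have key : ∀ x ∈ H, x.fst = r * ((q x.snd : ℚ) - 1) := by
    intro x hx
    have h1 : h₀ * x ∈ H := H.mul_mem hh₀ hx
    have h2 : x * h₀ ∈ H := H.mul_mem hx hh₀
    have heq : h₀ * x = x * h₀ := huniq _ h1 _ h2 (by simp [mul_comm])
    have hf := congrArg QSemidirect.fst heq
    simp only [QSemidirect.mul_fst, hsnd₀] at hf
    rw [hr, div_mul_eq_mul_div, eq_div_iff hne]
    linear_combination hf
  refine ⟨r, ?_⟩
  ext x
  constructor
  · intro hx
    refine ⟨x.snd, ?_⟩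
    have hk := key x hx
    ext
    · simp [hk]; ring
    · simp
  · rintro ⟨u, rfl⟩
    obtain ⟨h, hh, d, hd⟩ := hcompl ⟨0, u⟩
    have hsnd : h.snd = u := by
      have := congrArg QSemidirect.snd hd; simpa using this.symm
    have hf := key h hh
    have he : (⟨r,1⟩ : QSemidirect M q)⁻¹ * ⟨0,u⟩ * ⟨r,1⟩ = h := by
      ext
      · simp [hf, hsnd]; ring
      · simp [hsnd]
    rw [he]; exact hh
end
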